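/- arXiv:2005.08038 — 4 statements merged into one kernel-verified Lean document; each statement's English description precedes it below -/
import Mathlib

section
/- Let n ≥ 13 and let i be an integer with 0 ≤ i ≤ n−1. In the graph P(n,3), d(u_0, e_i^s) = min(i, n−i) if i ≤ 2 or i ≥ n−2, and d(u_0, e_i^s) = min(q_i + r_i + 1, q_n − q_i + r + 1) otherwise. -/
open SimpleGraph

/-- The vertex set of the generalized Petersen graph: two disjoint copies of `ZMod n`. -/
abbrev GPVert (n : ℕ) := ZMod n ⊕ ZMod n

/-- The outer vertices `u_j`. -/
def pu {n : ℕ} (j : ZMod n) : GPVert n := Sum.inl j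

/-- The inner vertices `v_j`. -/
def pv {n : ℕ} (j : ZMod n) : GPVert n := Sum.inr j

/-- The generalized Petersen graph `P(n,k)`, with edges
`u_j u_{j+1}`, `v_j v_{j+k}`, and `u_j v_j` for all `j`. -/
def GP (n k : ℕ) : SimpleGraph (GPVert n) :=
  SimpleGraph.fromRel fun a b =>
    (∃ j : ZMod n, a = pu j ∧ b = pu (j + 1)) ∨
    (∃ j : ZMod n, a = pv j ∧ b = pv (j + (k : ZMod n))) ∨
    (∃ j : ZMod n, a = pu j ∧ b = pv j)

/-- The distance from a vertex to an (unordered) edge: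
`d(x, yz) = min (d x y) (d x z)`. -/
noncomputable def edist {V : Type*} (G : SimpleGraph V) (x : V) (e : Sym2 V) : ℕ :=
  Sym2.lift ⟨fun a b => min (G.dist x a) (G.dist x b), fun a b => min_comm (G.dist x a) (G.dist x b)⟩ e

/-- `S` is an edge resolving set of `G` if any two distinct edges of `G`
are distinguished by their distance to some vertex of `S`. -/
def IsEdgeResolving {V : Type*} (G : SimpleGraph V) (S : Set V) : Prop :=
  ∀ e ∈ G.edgeSet, ∀ e' ∈ G.edgeSet, e ≠ e' → ∃ x ∈ S, edist G x e ≠ edist G x e'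

/-- `q_m`: the quotient of `m` upon division by 3. -/
def q3 (m : ℕ) : ℤ := (m : ℤ) / 3

/-- `r_m`: the residue of `m` modulo 3. -/
def r3 (m : ℕ) : ℤ := (m : ℤ) % 3

/-- The parameter `r = |r_n − r_i|`, except that `r = 0` when `(r_n, r_i) = (0, 2)`. -/
def rr (n i : ℕ) : ℤ := if n % 3 = 0 ∧ i % 3 = 2 then 0 else |r3 n - r3 i|

set_option linter.unusedSectionVars false

/-- strip distance to v_m -/
def fv3 (m : ℕ) : ℕ := m / 3 + m % 3 + 1
/-- strip distance to u_m -/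
def fu3 (m : ℕ) : ℕ := min m (fv3 m + 1)

/-- claimed distance from u_0 -/
def DD (n : ℕ) : GPVert n → ℕ
  | Sum.inl j => min (fu3 j.val) (fu3 (n - j.val))
  | Sum.inr j => min (fv3 j.val) (fv3 (n - j.val))

section

variable {n : ℕ} (hn : 13 ≤ n)
include hn

lemma three_ne : ((3 : ℕ) : ZMod n) ≠ 0 := by
  intro h
  rw [ZMod.natCast_eq_zero_iff] at h
  have := Nat.le_of_dvd (by norm_num) h
  omega

lemma gp_adj_u (j : ZMod n) : (GP n 3).Adj (pu j) (pu (j + 1)) := by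
  haveI : Fact (1 < n) := ⟨by omega⟩
  rw [GP, SimpleGraph.fromRel_adj]
  refine ⟨?_, Or.inl (Or.inl ⟨j, rfl, rfl⟩)⟩
  simp only [pu, ne_eq, Sum.inl.injEq, left_eq_add]
  exact one_ne_zero

lemma gp_adj_v (j : ZMod n) : (GP n 3).Adj (pv j) (pv (j + ((3:ℕ) : ZMod n))) := by
  rw [GP, SimpleGraph.fromRel_adj]
  refine ⟨?_, Or.inl (Or.inr (Or.inl ⟨j, rfl, rfl⟩))⟩
  simp only [pv, ne_eq, Sum.inr.injEq, left_eq_add]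
  exact three_ne hn

lemma gp_adj_s (j : ZMod n) : (GP n 3).Adj (pu j) (pv j) := by
  rw [GP, SimpleGraph.fromRel_adj]
  exact ⟨by simp [pu, pv], Or.inl (Or.inr (Or.inr ⟨j, rfl, rfl⟩))⟩

lemma lip_aux (x y : GPVert n)
    (h : (∃ j : ZMod n, x = pu j ∧ y = pu (j + 1)) ∨
      (∃ j : ZMod n, x = pv j ∧ y = pv (j + ((3:ℕ) : ZMod n))) ∨
      (∃ j : ZMod n, x = pu j ∧ y = pv j)) :
    DD n y ≤ DD n x + 1 ∧ DD n x ≤ DD n y + 1 := by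
  haveI : NeZero n := ⟨by omega⟩
  haveI : Fact (1 < n) := ⟨by omega⟩
  rcases h with ⟨j, rfl, rfl⟩ | ⟨j, rfl, rfl⟩ | ⟨j, rfl, rfl⟩
  · have hv : j.val < n := ZMod.val_lt j
    have h1 : (j + 1).val = (j.val + 1) % n := by
      rw [ZMod.val_add, ZMod.val_one]
    simp only [DD, pu]
    rcases Nat.lt_or_ge (j.val + 1) n with h' | h'
    · rw [h1, Nat.mod_eq_of_lt h']
      unfold fu3 fv3; omega
    · have he : j.val + 1 = n := by omega
      rw [h1, he, Nat.mod_self]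
      unfold fu3 fv3; omega
  · have hv : j.val < n := ZMod.val_lt j
    have h3 : ((3:ℕ) : ZMod n).val = 3 := by
      rw [ZMod.val_natCast, Nat.mod_eq_of_lt (by omega)]
    have h1 : (j + ((3:ℕ) : ZMod n)).val = (j.val + 3) % n := by
      rw [ZMod.val_add, h3]
    simp only [DD, pv]
    rcases Nat.lt_or_ge (j.val + 3) n with h' | h'
    · rw [h1, Nat.mod_eq_of_lt h']
      unfold fv3; omega
    · have he : (j.val + 3) % n = j.val + 3 - n := by
        rw [Nat.mod_eq_sub_mod h', Nat.mod_eq_of_lt (by omega)]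
      rw [h1, he]
      unfold fv3; omega
  · have hv : j.val < n := ZMod.val_lt j
    simp only [DD, pu, pv]
    unfold fu3 fv3; omega

lemma lip {x y : GPVert n} (h : (GP n 3).Adj x y) : DD n y ≤ DD n x + 1 := by
  rw [GP, SimpleGraph.fromRel_adj] at h
  rcases h.2 with h' | h'
  · exact (lip_aux hn x y h').1
  · exact (lip_aux hn y x h').2

lemma lower {x y : GPVert n} (w : (GP n 3).Walk x y) : DD n y ≤ DD n x + w.length := by
  induction w with
  | nil => simp
  | cons h p ih =>
      have := lip hn h
      simp only [SimpleGraph.Walk.length_cons]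
      omega

lemma DD_eq_zero {x : GPVert n} (h : DD n x = 0) : x = pu 0 := by
  haveI : NeZero n := ⟨by omega⟩
  cases x with
  | inl j =>
      have hv : j.val < n := ZMod.val_lt j
      have : j.val = 0 := by
        simp only [DD] at h
        unfold fu3 fv3 at h; omega
      have : j = 0 := by rwa [← ZMod.val_eq_zero]
      rw [this]; rfl
  | inr j =>
      have hv : j.val < n := ZMod.val_lt j
      exfalso
      simp only [DD] at h
      unfold fv3 at h; omega

lemma descent (x : GPVert n) (hx : DD n x ≠ 0) :
    ∃ y, (GP n 3).Adj y x ∧ DD n y < DD n x := by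
  haveI : NeZero n := ⟨by omega⟩
  cases x with
  | inl j =>
    have hv : j.val < n := ZMod.val_lt j
    set a := j.val with ha
    have ha1 : 1 ≤ a := by
      by_contra h
      apply hx
      simp only [DD]
      unfold fu3 fv3; omega
    have hj : ((a : ℕ) : ZMod n) = j := ZMod.natCast_zmod_val j
    by_cases hc : fu3 a ≤ fu3 (n - a)
    · by_cases hc2 : a ≤ fv3 a + 1
      · -- neighbor u_{a-1}
        refine ⟨pu (((a - 1 : ℕ)) : ZMod n), ?_, ?_⟩
        · have := gp_adj_u hn (((a - 1 : ℕ)) : ZMod n)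
          have he : (((a - 1 : ℕ)) : ZMod n) + 1 = j := by
            rw [Nat.cast_sub ha1, Nat.cast_one, ← hj]
            ring
          rwa [he] at this
        · simp only [DD, pu, ZMod.val_natCast, Nat.mod_eq_of_lt (show a - 1 < n by omega)]
          unfold fu3 fv3 at *; omega
      · -- neighbor v_a
        refine ⟨pv j, gp_adj_s hn j |>.symm, ?_⟩
        simp only [DD, pu, pv, ← ha]
        unfold fu3 fv3 at *; omega
    · push_neg at hc
      by_cases hc2 : n - a ≤ fv3 (n - a) + 1
      · -- neighbor u_{a+1}
        refine ⟨pu (((a + 1 : ℕ)) : ZMod n), ?_, ?_⟩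
        · have := gp_adj_u hn j
          have he : pu (j + 1) = pu (((a + 1 : ℕ)) : ZMod n) := by
            rw [Nat.cast_add, Nat.cast_one, hj]
          rw [he] at this
          exact this.symm
        · rcases Nat.lt_or_ge (a + 1) n with h' | h'
          · simp only [DD, pu, ZMod.val_natCast, Nat.mod_eq_of_lt h', ← ha]
            unfold fu3 fv3 at *; omega
          · have he : a + 1 = n := by omega
            simp only [DD, pu, ZMod.val_natCast, he, Nat.mod_self, ← ha]
            unfold fu3 fv3 at *; omega
      · -- neighbor v_a
        refine ⟨pv j, gp_adj_s hn j |>.symm, ?_⟩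
        simp only [DD, pu, pv, ← ha]
        unfold fu3 fv3 at *; omega
  | inr j =>
    have hv : j.val < n := ZMod.val_lt j
    set a := j.val with ha
    have hj : ((a : ℕ) : ZMod n) = j := ZMod.natCast_zmod_val j
    by_cases hc : fv3 a ≤ fv3 (n - a)
    · rcases Nat.lt_or_ge a 3 with h3 | h3
      · -- neighbor u_a
        refine ⟨pu j, gp_adj_s hn j, ?_⟩
        simp only [DD, pu, pv, ← ha]
        unfold fu3 fv3 at *; omega
      · -- neighbor v_{a-3}
        refine ⟨pv (((a - 3 : ℕ)) : ZMod n), ?_, ?_⟩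
        · have := gp_adj_v hn (((a - 3 : ℕ)) : ZMod n)
          have he : (((a - 3 : ℕ)) : ZMod n) + ((3:ℕ) : ZMod n) = j := by
            rw [Nat.cast_sub h3, ← hj]
            ring
          rwa [he] at this
        · simp only [DD, pv, ZMod.val_natCast, Nat.mod_eq_of_lt (show a - 3 < n by omega)]
          unfold fv3 at *; omega
    · push_neg at hc
      have hb1 : 1 ≤ n - a := by omega
      rcases Nat.lt_or_ge (n - a) 3 with h3 | h3
      · -- neighbor u_a
        refine ⟨pu j, gp_adj_s hn j, ?_⟩
        simp only [DD, pu, pv, ← ha]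
        unfold fu3 fv3 at *; omega
      · -- neighbor v_{a+3}
        refine ⟨pv (((a + 3 : ℕ)) : ZMod n), ?_, ?_⟩
        · have := gp_adj_v hn j
          have he : pv (j + ((3:ℕ) : ZMod n)) = pv (((a + 3 : ℕ)) : ZMod n) := by
            rw [Nat.cast_add, hj]
          rw [he] at this
          exact this.symm
        · rcases Nat.lt_or_ge (a + 3) n with h' | h'
          · simp only [DD, pv, ZMod.val_natCast, Nat.mod_eq_of_lt h']
            unfold fv3 at *; omega
          · have he : a + 3 = n := by omega
            simp only [DD, pv, ZMod.val_natCast, he, Nat.mod_self]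
            unfold fv3 at *; omega

lemma upper : ∀ k (x : GPVert n), DD n x ≤ k →
    ∃ w : (GP n 3).Walk (pu 0) x, w.length ≤ DD n x := by
  intro k
  induction k with
  | zero =>
      intro x h
      have hx : x = pu 0 := DD_eq_zero hn (by omega)
      subst hx
      exact ⟨SimpleGraph.Walk.nil, by simp⟩
  | succ k ih =>
      intro x h
      by_cases h0 : DD n x = 0
      · have hx : x = pu 0 := DD_eq_zero hn h0
        subst hx
        exact ⟨SimpleGraph.Walk.nil, by simp⟩
      · obtain ⟨y, hadj, hlt⟩ := descent hn x h0
        obtain ⟨w, hw⟩ := ih y (by omega)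
        exact ⟨w.concat hadj, by rw [SimpleGraph.Walk.length_concat]; omega⟩

lemma dist_eq_DD (x : GPVert n) : (GP n 3).dist (pu 0) x = DD n x := by
  haveI : NeZero n := ⟨by omega⟩
  obtain ⟨w, hw⟩ := upper hn (DD n x) x le_rfl
  refine le_antisymm ((SimpleGraph.dist_le w).trans hw) ?_
  have hr : (GP n 3).Reachable (pu 0) x := ⟨w⟩
  obtain ⟨p, hp⟩ := hr.exists_walk_length_eq_dist
  have hlow := lower hn p
  have h0 : DD n (pu 0) = 0 := by
    simp only [DD, pu, ZMod.val_zero]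
    unfold fu3; omega
  omega

end

/-- The distance from `u_0` to the spoke `e_i^s = u_i v_i` in `P(n,3)`, `n ≥ 13`. -/
theorem dist_u0_spoke (n i : ℕ) (hn : 13 ≤ n) (hi : i ≤ n - 1) :
    (edist (GP n 3) (pu 0) s(pu (i : ZMod n), pv (i : ZMod n)) : ℤ) =
      if i ≤ 2 ∨ n - 2 ≤ i then
        min (i : ℤ) ((n : ℤ) - i)
      else
        min (q3 i + r3 i + 1) (q3 n - q3 i + rr n i + 1) := by
  haveI : NeZero n := ⟨by omega⟩
  have hin : i < n := by omega
  have hlift : edist (GP n 3) (pu 0) s(pu (i : ZMod n), pv (i : ZMod n)) =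
      min ((GP n 3).dist (pu 0) (pu (i : ZMod n))) ((GP n 3).dist (pu 0) (pv (i : ZMod n))) := rfl
  rw [hlift, dist_eq_DD hn, dist_eq_DD hn]
  have hval : ((i : ZMod n)).val = i := ZMod.val_natCast_of_lt hin
  simp only [DD, pu, pv, hval]
  simp only [rr, q3, r3]
  split_ifs with h1 h2
  · unfold fu3 fv3; push_cast; omega
  · unfold fu3 fv3; push_cast; omega
  · rcases abs_cases (((n : ℤ) % 3) - ((i : ℤ) % 3)) with ⟨hab, _⟩ | ⟨hab, _⟩ <;>
      rw [hab] <;> (unfold fu3 fv3; push_cast; omega)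
end

section
/- Let n ≥ 13 and let i be an integer with 0 ≤ i ≤ n−1. In the graph P(n,3), d(u_0, e_i^v) = min(i+1, n−i+1) if i ≤ 1 or i = n−1, and d(u_0, e_i^v) = min(q_i + r_i + 1, q_n − q_i + r) otherwise. -/
open SimpleGraph

/-! A walk in `P(n,3)` moves the index by `±1` along an outer edge and by `±3` along an inner
edge, and changes sides along a spoke; conversely, outer steps, one spoke and inner steps form a
walk. Hence `d(u_0, v_j) = 1 + min (|t| + |w|)` over `t + 3w ≡ j (mod n)`, that is, one more than
the least word length, for the generators `1, 3`, of a lift of `j` to `ℤ`. For lifts in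
`[0, n + 2]` only `m` and `m - n` compete, and the theorem becomes arithmetic on the four
candidates coming from `v_i` and `v_{i+3}`. -/

namespace SimpleGraph

lemma exists_walk_add_zsmul {V R : Type*} [AddCommGroup R] {G : SimpleGraph V} (f : R → V)
    (s : R) (hf : ∀ j, G.Adj (f j) (f (j + s))) (a : R) (t : ℤ) :
    ∃ p : G.Walk (f a) (f (a + t • s)), p.length = t.natAbs := by
  induction t using Int.induction_on with
  | zero => exact ⟨Walk.nil.copy rfl (by simp), by simp⟩
  | succ i ih =>
    obtain ⟨p, hp⟩ := ih
    refine ⟨(p.concat (hf _)).copy rfl (by rw [add_zsmul, one_zsmul, add_assoc]), ?_⟩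
    simp only [Walk.length_copy, Walk.length_concat, hp]
    omega
  | pred i ih =>
    obtain ⟨p, hp⟩ := ih
    have h := hf (a + (-(i : ℤ) - 1) • s)
    rw [show a + (-(i : ℤ) - 1) • s + s = a + (-(i : ℤ)) • s by
      rw [sub_zsmul, one_zsmul]; abel] at h
    refine ⟨p.concat h.symm, ?_⟩
    simp only [Walk.length_concat, hp]
    omega

end SimpleGraph

lemma edist_mk {V : Type*} (G : SimpleGraph V) (x a b : V) :
    edist G x s(a, b) = min (G.dist x a) (G.dist x b) := rfl

/-- The word length of `m` in `ℤ` with respect to the generators `1` and `3`. -/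
def oneThreeNorm (m : ℤ) : ℕ := m.natAbs / 3 + m.natAbs % 3

lemma exists_add_mul_three_eq_oneThreeNorm (m : ℤ) :
    ∃ t w : ℤ, t + w * 3 = m ∧ t.natAbs + w.natAbs = oneThreeNorm m := by
  unfold oneThreeNorm
  rcases Int.natAbs_eq m with h | h
  · exact ⟨(m.natAbs % 3 : ℕ), (m.natAbs / 3 : ℕ), by omega, by omega⟩
  · exact ⟨-(m.natAbs % 3 : ℕ), -(m.natAbs / 3 : ℕ), by omega, by omega⟩

lemma oneThreeNorm_add_mul_three_le (t w : ℤ) :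
    oneThreeNorm (t + w * 3) ≤ t.natAbs + w.natAbs := by
  unfold oneThreeNorm
  omega

lemma oneThreeNorm_le_of_natAbs_add_six_le {a b : ℤ} (h : a.natAbs + 6 ≤ b.natAbs) :
    oneThreeNorm a ≤ oneThreeNorm b := by
  unfold oneThreeNorm
  omega

lemma min_oneThreeNorm_le_oneThreeNorm_add_mul {n : ℕ} (hn : 10 ≤ n) {m : ℤ} (h0 : 0 ≤ m)
    (h : m ≤ n + 2) (l : ℤ) :
    min (oneThreeNorm m) (oneThreeNorm (m - n)) ≤ oneThreeNorm (m + n * l) := by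
  obtain hl | rfl | rfl | hl : 1 ≤ l ∨ l = 0 ∨ l = -1 ∨ l ≤ -2 := by omega
  · have : (n : ℤ) ≤ n * l := le_mul_of_one_le_right (by positivity) hl
    exact min_le_of_left_le (oneThreeNorm_le_of_natAbs_add_six_le (by omega))
  · simp
  · simp [sub_eq_add_neg]
  · have : n * l ≤ n * (-2 : ℤ) := mul_le_mul_of_nonneg_left hl (by positivity)
    exact min_le_of_right_le (oneThreeNorm_le_of_natAbs_add_six_le (by omega))

lemma oneThreeNorm_inner_edge_eq {n i : ℕ} (hn : 13 ≤ n) (hi : i ≤ n - 1) :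
    ((min (min (oneThreeNorm i) (oneThreeNorm (i - n)) + 1)
        (min (oneThreeNorm (i + 3)) (oneThreeNorm (i + 3 - n)) + 1) : ℕ) : ℤ) =
      if i ≤ 1 ∨ i = n - 1 then
        min ((i : ℤ) + 1) ((n : ℤ) - i + 1)
      else
        min (q3 i + r3 i + 1) (q3 n - q3 i + rr n i) := by
  unfold rr oneThreeNorm q3 r3
  rw [Int.abs_eq_natAbs]
  split_ifs <;> omega

namespace GP

variable {n k : ℕ}

lemma adj_pu_add_one (hn : n ≠ 1) (j : ZMod n) : (GP n k).Adj (pu j) (pu (j + 1)) := by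
  refine (fromRel_adj _ _ _).2 ⟨?_, Or.inl (Or.inl ⟨j, rfl, rfl⟩)⟩
  simpa [pu, ZMod.one_eq_zero_iff] using hn

lemma adj_pv_add (hk : ¬n ∣ k) (j : ZMod n) : (GP n k).Adj (pv j) (pv (j + k)) := by
  refine (fromRel_adj _ _ _).2 ⟨?_, Or.inl (Or.inr (Or.inl ⟨j, rfl, rfl⟩))⟩
  simpa [pv, ZMod.natCast_eq_zero_iff] using hk

lemma adj_pu_pv (j : ZMod n) : (GP n k).Adj (pu j) (pv j) :=
  (fromRel_adj _ _ _).2 ⟨by simp [pu, pv], Or.inl (Or.inr (Or.inr ⟨j, rfl, rfl⟩))⟩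

lemma exists_walk_pu_zero_pv (hn : n ≠ 1) (hk : ¬n ∣ k) (t w : ℤ) :
    ∃ p : (GP n k).Walk (pu 0) (pv (t + w * k)), p.length = t.natAbs + w.natAbs + 1 := by
  obtain ⟨p, hp⟩ := exists_walk_add_zsmul pu 1 (adj_pu_add_one (k := k) hn) 0 t
  obtain ⟨q, hq⟩ := exists_walk_add_zsmul pv (k : ZMod n) (adj_pv_add hk) (0 + t • 1) w
  refine ⟨p.append (Walk.cons (adj_pu_pv _) q) |>.copy rfl (by simp [zsmul_eq_mul]), ?_⟩
  simp only [Walk.length_copy, Walk.length_append, Walk.length_cons, hp, hq]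
  omega

def index : GPVert n → ZMod n := Sum.elim id id

def side : GPVert n → ℤ := Sum.elim 0 1

lemma exists_index_eq_of_adj {x y : GPVert n} (h : (GP n k).Adj x y) :
    ∃ t w : ℤ, index y = index x + t + w * k ∧
      t.natAbs + w.natAbs + (side y - side x).natAbs ≤ 1 := by
  obtain ⟨-, (⟨j, rfl, rfl⟩ | ⟨j, rfl, rfl⟩ | ⟨j, rfl, rfl⟩) |
      (⟨j, rfl, rfl⟩ | ⟨j, rfl, rfl⟩ | ⟨j, rfl, rfl⟩)⟩ := (fromRel_adj _ _ _).1 h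
  · exact ⟨1, 0, by simp [index, pu], by simp [side, pu]⟩
  · exact ⟨0, 1, by simp [index, pv], by simp [side, pv]⟩
  · exact ⟨0, 0, by simp [index, pu, pv], by simp [side, pu, pv]⟩
  · exact ⟨-1, 0, by simp [index, pu], by simp [side, pu]⟩
  · exact ⟨0, -1, by simp [index, pv], by simp [side, pv]⟩
  · exact ⟨0, 0, by simp [index, pu, pv], by simp [side, pu, pv]⟩

lemma exists_index_eq_of_walk {x y : GPVert n} (p : (GP n k).Walk x y) :
    ∃ t w : ℤ, index y = index x + t + w * k ∧
      t.natAbs + w.natAbs + (side y - side x).natAbs ≤ p.length := by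
  induction p with
  | nil => exact ⟨0, 0, by simp, by simp⟩
  | cons h _ ih =>
    obtain ⟨t, w, hidx, hlen⟩ := exists_index_eq_of_adj h
    obtain ⟨t', w', hidx', hlen'⟩ := ih
    refine ⟨t + t', w + w', by rw [hidx', hidx]; push_cast; ring, ?_⟩
    rw [Walk.length_cons]
    omega

lemma dist_pu_zero_pv_le (hn : 3 < n) (m l : ℤ) :
    (GP n 3).dist (pu 0) (pv m) ≤ oneThreeNorm (m + n * l) + 1 := by
  obtain ⟨t, w, hsum, hlen⟩ := exists_add_mul_three_eq_oneThreeNorm (m + n * l)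
  obtain ⟨p, hp⟩ := exists_walk_pu_zero_pv (k := 3) (by omega)
    (Nat.not_dvd_of_pos_of_lt (by norm_num) hn) t w
  have hv : (t : ZMod n) + w * (3 : ℕ) = m := by
    simpa using congrArg (Int.cast : ℤ → ZMod n) hsum
  rw [← hlen, ← hp, ← Walk.length_copy p rfl (congrArg pv hv)]
  exact dist_le _

lemma exists_dist_pu_zero_pv_eq (hn : 3 < n) (m : ℤ) :
    ∃ l : ℤ, (GP n 3).dist (pu 0) (pv m) = oneThreeNorm (m + n * l) + 1 := by
  obtain ⟨p₀, -⟩ := exists_walk_pu_zero_pv (k := 3) (by omega)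
    (Nat.not_dvd_of_pos_of_lt (by norm_num) hn) m 0
  obtain ⟨p, hp⟩ := Reachable.exists_walk_length_eq_dist
    (⟨p₀.copy rfl (by simp)⟩ : (GP n 3).Reachable (pu 0) (pv m))
  obtain ⟨t, w, hidx, hlen⟩ := exists_index_eq_of_walk p
  obtain ⟨l, hl⟩ : (n : ℤ) ∣ t + w * 3 - m := by
    rw [← ZMod.intCast_zmod_eq_zero_iff_dvd]
    simp only [index, pu, pv, Sum.elim_inl, Sum.elim_inr, id, zero_add] at hidx
    push_cast
    rw [hidx]
    ring
  refine ⟨l, le_antisymm (dist_pu_zero_pv_le hn m l) ?_⟩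
  have := oneThreeNorm_add_mul_three_le t w
  simp only [side, pu, pv, Sum.elim_inl, Sum.elim_inr, Pi.one_apply, Pi.zero_apply, sub_zero,
    Int.natAbs_one] at hlen
  rw [show m + n * l = t + w * 3 by omega, ← hp]
  exact (Nat.add_le_add_right this 1).trans hlen

lemma dist_pu_zero_pv_intCast (hn : 10 ≤ n) {m : ℤ} (h0 : 0 ≤ m) (h : m ≤ n + 2) :
    (GP n 3).dist (pu 0) (pv m) = min (oneThreeNorm m) (oneThreeNorm (m - n)) + 1 := by
  obtain ⟨l, hl⟩ := exists_dist_pu_zero_pv_eq (n := n) (by omega) m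
  have h₀ := dist_pu_zero_pv_le (n := n) (by omega) m 0
  have h₁ := dist_pu_zero_pv_le (n := n) (by omega) m (-1)
  have := min_oneThreeNorm_le_oneThreeNorm_add_mul hn h0 h l
  rw [mul_zero, add_zero] at h₀
  rw [mul_neg_one, ← sub_eq_add_neg] at h₁
  omega

end GP

/-- The distance from `u_0` to the inner edge `e_i^v = v_i v_{i+3}` in `P(n,3)`, `n ≥ 13`. -/
theorem dist_u0_inner_edge (n i : ℕ) (hn : 13 ≤ n) (hi : i ≤ n - 1) :
    (edist (GP n 3) (pu 0) s(pv (i : ZMod n), pv ((i : ZMod n) + 3)) : ℤ) =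
      if i ≤ 1 ∨ i = n - 1 then
        min ((i : ℤ) + 1) ((n : ℤ) - i + 1)
      else
        min (q3 i + r3 i + 1) (q3 n - q3 i + rr n i) := by
  have hv : (i : ZMod n) = ((i : ℤ) : ZMod n) := (Int.cast_natCast i).symm
  have hv' : (i : ZMod n) + 3 = ((i + 3 : ℤ) : ZMod n) := by push_cast; rfl
  rw [edist_mk, hv', hv, GP.dist_pu_zero_pv_intCast (by omega) (by omega) (by omega),
    GP.dist_pu_zero_pv_intCast (by omega) (by omega) (by omega)]
  exact oneThreeNorm_inner_edge_eq hn hi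
end

section
/- Let n ≥ 13 and let i be an integer with 0 ≤ i ≤ ⌊n/2⌋. In the graph P(n,3), the vertex distance satisfies: d(u_0, u_i) = q_i + r_i if i ≤ 2; d(u_0, u_i) = q_i + r_i + 1 if (r_n', i) = (5, ⌊n/2⌋); and d(u_0, u_i) = q_i + r_i + 2 otherwise. -/
open SimpleGraph

variable {n : ℕ}

lemma natCast_ne (hn : 13 ≤ n) {m : ℕ} (h1 : 0 < m) (h2 : m < n) : ((m:ℕ) : ZMod n) ≠ 0 := by
  have : NeZero n := ⟨by omega⟩
  rw [Ne, ZMod.natCast_eq_zero_iff]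
  intro h
  exact absurd (Nat.le_of_dvd h1 h) (by omega)

lemma gp_adj (k : ℕ) (x y : GPVert n) : (GP n k).Adj x y ↔ x ≠ y ∧
    (((∃ j : ZMod n, x = pu j ∧ y = pu (j + 1)) ∨
    (∃ j : ZMod n, x = pv j ∧ y = pv (j + (k : ZMod n))) ∨
    (∃ j : ZMod n, x = pu j ∧ y = pv j)) ∨
    ((∃ j : ZMod n, y = pu j ∧ x = pu (j + 1)) ∨
    (∃ j : ZMod n, y = pv j ∧ x = pv (j + (k : ZMod n))) ∨
    (∃ j : ZMod n, y = pu j ∧ x = pv j))) := by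
  rw [GP, fromRel_adj]

lemma adj_uu (hn : 13 ≤ n) (a : ZMod n) : (GP n 3).Adj (pu a) (pu (a+1)) := by
  rw [gp_adj]
  refine ⟨?_, Or.inl (Or.inl ⟨a, rfl, rfl⟩)⟩
  simp only [pu, Ne, Sum.inl.injEq]
  intro h
  have h1 : (1 : ZMod n) = 0 := by linear_combination -h
  exact natCast_ne hn (m := 1) (by norm_num) (by omega) (by simpa using h1)

lemma adj_vv (hn : 13 ≤ n) (a : ZMod n) : (GP n 3).Adj (pv a) (pv (a+3)) := by
  rw [gp_adj]
  refine ⟨?_, Or.inl (Or.inr (Or.inl ⟨a, rfl, by norm_num⟩))⟩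
  simp only [pv, Ne, Sum.inr.injEq]
  intro h
  have h1 : (3 : ZMod n) = 0 := by linear_combination -h
  exact natCast_ne hn (m := 3) (by norm_num) (by omega) (by push_cast; simpa using h1)

lemma adj_uv (a : ZMod n) : (GP n 3).Adj (pu a) (pv a) := by
  rw [gp_adj]
  exact ⟨by simp [pu, pv], Or.inl (Or.inr (Or.inr ⟨a, rfl, rfl⟩))⟩

lemma adj_cases {x y : GPVert n} (h : (GP n 3).Adj x y) :
    (∃ a : ZMod n, x = pu a ∧ (y = pu (a+1) ∨ y = pu (a-1))) ∨
    (∃ a : ZMod n, x = pv a ∧ (y = pv (a+3) ∨ y = pv (a-3))) ∨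
    (∃ a : ZMod n, (x = pu a ∧ y = pv a) ∨ (x = pv a ∧ y = pu a)) := by
  rw [gp_adj] at h
  obtain ⟨-, h⟩ := h
  rcases h with (⟨j, rfl, rfl⟩ | ⟨j, rfl, rfl⟩ | ⟨j, rfl, rfl⟩) | (⟨j, rfl, rfl⟩ | ⟨j, rfl, rfl⟩ | ⟨j, rfl, rfl⟩)
  · exact Or.inl ⟨j, rfl, Or.inl rfl⟩
  · exact Or.inr (Or.inl ⟨j, rfl, Or.inl (by norm_num)⟩)
  · exact Or.inr (Or.inr ⟨j, Or.inl ⟨rfl, rfl⟩⟩)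
  · exact Or.inl ⟨j+1, rfl, Or.inr (by rw [add_sub_cancel_right])⟩
  · exact Or.inr (Or.inl ⟨j + (3:ℕ), rfl, Or.inr (by push_cast; rw [add_sub_cancel_right])⟩)
  · exact Or.inr (Or.inr ⟨j, Or.inr ⟨rfl, rfl⟩⟩)

lemma walk_inner (hn : 13 ≤ n) (a : ZMod n) (t : ℕ) :
    ∃ p : (GP n 3).Walk (pv a) (pv (a + 3*t)), p.length = t := by
  induction t with
  | zero => exact ⟨SimpleGraph.Walk.nil.copy rfl (by push_cast; ring), by simp⟩
  | succ t ih =>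
    obtain ⟨p, hp⟩ := ih
    exact ⟨(p.concat (adj_vv hn _)).copy rfl (by push_cast; ring), by simp [hp]⟩

lemma walk_outer (hn : 13 ≤ n) (a : ZMod n) (t : ℕ) :
    ∃ p : (GP n 3).Walk (pu a) (pu (a + t)), p.length = t := by
  induction t with
  | zero => exact ⟨SimpleGraph.Walk.nil.copy rfl (by push_cast; ring), by simp⟩
  | succ t ih =>
    obtain ⟨p, hp⟩ := ih
    exact ⟨(p.concat (adj_uu hn _)).copy rfl (by push_cast; ring), by simp [hp]⟩

lemma walk_inner_back (hn : 13 ≤ n) (a : ZMod n) (t : ℕ) :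
    ∃ p : (GP n 3).Walk (pv a) (pv (a - 3*t)), p.length = t := by
  obtain ⟨p, hp⟩ := walk_inner hn (a - 3*t) t
  exact ⟨(p.copy rfl (by ring)).reverse, by simp [hp]⟩

def idx : GPVert n → ZMod n := Sum.elim id id
@[simp] lemma idx_pu (a : ZMod n) : idx (pu a) = a := rfl
@[simp] lemma idx_pv (a : ZMod n) : idx (pv a) = a := rfl
@[simp] lemma isLeft_pu (a : ZMod n) : (pu a).isLeft = true := rfl
@[simp] lemma isLeft_pv (a : ZMod n) : (pv a).isLeft = false := rfl

lemma walk_invariant (hn : 13 ≤ n) {x y : GPVert n} (p : (GP n 3).Walk x y) :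
    ∃ (s t k : ℕ) (D T : ℤ),
      p.length = s + t + k ∧ D.natAbs ≤ s ∧ T.natAbs ≤ t ∧
      ((D + 3*T : ℤ) : ZMod n) = idx y - idx x ∧
      (k % 2 = if x.isLeft = y.isLeft then 0 else 1) ∧
      (x.isLeft = true → y.isLeft = true → 0 < t → 2 ≤ k) := by
  induction p with
  | nil => exact ⟨0, 0, 0, 0, 0, by simp, by simp, by simp, by simp, by simp, by simp⟩
  | @cons x m z h q ih =>
    obtain ⟨s, t, k, D, T, hlen, hD, hT, heq, hk, hk2⟩ := ih
    rcases adj_cases h with ⟨a, hu, (hv | hv)⟩ | ⟨a, hu, (hv | hv)⟩ | ⟨a, (⟨hu, hv⟩ | ⟨hu, hv⟩)⟩ <;>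
      subst hu <;> subst hv
    · -- outer +1 : u = pu a, v = pu (a+1)
      refine ⟨s+1, t, k, D+1, T, by simp [hlen]; ring, by omega, hT, ?_, by simpa using hk, by simpa using hk2⟩
      push_cast [heq]
      simp only [idx_pu] at heq ⊢
      push_cast at heq ⊢
      linear_combination heq
    · refine ⟨s+1, t, k, D-1, T, by simp [hlen]; ring, by omega, hT, ?_, by simpa using hk, by simpa using hk2⟩
      simp only [idx_pu] at heq ⊢
      push_cast at heq ⊢
      linear_combination heq
    · -- inner +3
      refine ⟨s, t+1, k, D, T+1, by simp [hlen]; ring, hD, by omega, ?_, by simpa using hk, by simp⟩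
      simp only [idx_pv] at heq ⊢
      push_cast at heq ⊢
      linear_combination heq
    · refine ⟨s, t+1, k, D, T-1, by simp [hlen]; ring, hD, by omega, ?_, by simpa using hk, by simp⟩
      simp only [idx_pv] at heq ⊢
      push_cast at heq ⊢
      linear_combination heq
    · -- spoke pu a → pv a
      refine ⟨s, t, k+1, D, T, by simp [hlen]; ring, hD, hT, by simpa using heq, ?_, ?_⟩
      · simp only [isLeft_pu, isLeft_pv] at hk ⊢
        cases hz : z.isLeft <;> simp [hz] at hk ⊢ <;> omega
      · intro _ hy _
        simp only [isLeft_pv, isLeft_pu] at hk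
        rw [hy] at hk
        simp at hk
        omega
    · -- spoke pv a → pu a
      refine ⟨s, t, k+1, D, T, by simp [hlen]; ring, hD, hT, by simpa using heq, ?_, by simp⟩
      simp only [isLeft_pu, isLeft_pv] at hk ⊢
      cases hz : z.isLeft <;> simp [hz] at hk ⊢ <;> omega

lemma zmod_cast_eq {a b : ℕ} (h : a = b) : ((a:ℕ) : ZMod n) = ((b:ℕ) : ZMod n) := by rw [h]

lemma dist_le_outer (hn : 13 ≤ n) (i : ℕ) : (GP n 3).dist (pu 0) (pu (i : ZMod n)) ≤ i := by
  obtain ⟨p, hp⟩ := walk_outer hn 0 i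
  have := SimpleGraph.dist_le (p.copy rfl (by rw [zero_add]))
  simpa [hp] using this

lemma dist_le_inner (hn : 13 ≤ n) (i : ℕ) (h3 : 3 ≤ i) :
    (GP n 3).dist (pu 0) (pu (i : ZMod n)) ≤ i/3 + i%3 + 2 := by
  obtain ⟨p, hp⟩ := walk_inner hn (0 : ZMod n) (i/3)
  rcases (by omega : i % 3 = 0 ∨ i % 3 = 1 ∨ i % 3 = 2) with hr | hr | hr
  · have he : (0:ZMod n) + 3*((i/3 : ℕ)) = ((i:ℕ) : ZMod n) := by
      have := zmod_cast_eq (n := n) (by omega : 3*(i/3) = i)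
      push_cast at this ⊢; linear_combination this
    have := SimpleGraph.dist_le ((SimpleGraph.Walk.cons (adj_uv 0) (p.concat (adj_uv _).symm)).copy rfl (by rw [he]))
    simp only [SimpleGraph.Walk.length_copy, SimpleGraph.Walk.length_cons,
      SimpleGraph.Walk.length_concat, hp] at this
    omega
  · have he : ((0:ZMod n) + 3*((i/3 : ℕ))) + 1 = ((i:ℕ) : ZMod n) := by
      have := zmod_cast_eq (n := n) (by omega : 3*(i/3) + 1 = i)
      push_cast at this ⊢; linear_combination this
    have := SimpleGraph.dist_le ((SimpleGraph.Walk.cons (adj_uv 0)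
      ((p.concat (adj_uv _).symm).concat (adj_uu hn _))).copy rfl (by rw [he]))
    simp only [SimpleGraph.Walk.length_copy, SimpleGraph.Walk.length_cons,
      SimpleGraph.Walk.length_concat, hp] at this
    omega
  · obtain ⟨p, hp⟩ := walk_inner hn ((0 : ZMod n)+1) (i/3)
    have he : (((0:ZMod n) + 1 + 3*((i/3 : ℕ))) + 1) = ((i:ℕ) : ZMod n) := by
      have := zmod_cast_eq (n := n) (by omega : 3*(i/3) + 2 = i)
      push_cast at this ⊢; linear_combination this
    have := SimpleGraph.dist_le ((SimpleGraph.Walk.cons (adj_uu hn 0) (SimpleGraph.Walk.cons (adj_uv _)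
      ((p.concat (adj_uv _).symm).concat (adj_uu hn _)))).copy rfl (by rw [he]))
    simp only [SimpleGraph.Walk.length_copy, SimpleGraph.Walk.length_cons,
      SimpleGraph.Walk.length_concat, hp] at this
    omega

lemma dist_le_special (hn : 13 ≤ n) (i : ℕ) (h5 : n % 6 = 5) (h2 : i = n / 2) :
    (GP n 3).dist (pu 0) (pu (i : ZMod n)) ≤ i/3 + i%3 + 1 := by
  obtain ⟨p, hp⟩ := walk_inner_back hn (0 : ZMod n) (n/6 + 1)
  have he : (0:ZMod n) - 3*((n/6 + 1 : ℕ)) = ((i:ℕ) : ZMod n) := by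
    have h0 : ((i + 3*(n/6+1) : ℕ) : ZMod n) = ((n:ℕ) : ZMod n) := zmod_cast_eq (by omega)
    rw [ZMod.natCast_self] at h0
    push_cast at h0 ⊢
    linear_combination -h0
  have := SimpleGraph.dist_le ((SimpleGraph.Walk.cons (adj_uv 0) (p.concat (adj_uv _).symm)).copy rfl (by rw [he]))
  simp only [SimpleGraph.Walk.length_copy, SimpleGraph.Walk.length_cons,
    SimpleGraph.Walk.length_concat, hp] at this
  omega

lemma key_min (D T m : ℤ) (h : D + 3*T = m) (hm : 0 ≤ m) :
    m/3 + m%3 ≤ D.natAbs + T.natAbs := by omega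

lemma arith_lb (n i : ℕ) (hn : 13 ≤ n) (hi : i ≤ n/2) (s t k : ℕ) (D T c : ℤ)
    (hD : D.natAbs ≤ s) (hT : T.natAbs ≤ t) (heq : D + 3*T = (i:ℤ) + c*(n:ℤ))
    (hk2 : 0 < t → 2 ≤ k) :
    (if i ≤ 2 then i else if n%6=5 ∧ i = n/2 then i/3+i%3+1 else i/3+i%3+2) ≤ s+t+k := by
  rcases (by omega : c = 0 ∨ c = -1 ∨ 1 ≤ c ∨ c ≤ -2) with rfl | rfl | hc | hc
  · have h1 := key_min D T ((i:ℤ)) (by omega) (by positivity)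
    split_ifs <;> omega
  · have h1 := key_min (-D) (-T) (((n - i : ℕ)) : ℤ) (by
      push_cast [Nat.cast_sub (by omega : i ≤ n)]; omega) (by positivity)
    rw [Int.natAbs_neg, Int.natAbs_neg] at h1
    split_ifs with ha hb
    · omega
    · omega
    · have h2 : i/3 + i%3 ≤ (n-i)/3 + (n-i)%3 := by omega
      omega
  · have key : (n:ℤ) ≤ c * (n:ℤ) := by
      have := mul_le_mul_of_nonneg_right hc (by positivity : (0:ℤ) ≤ (n:ℤ))
      simpa using this
    generalize hM : c * (n:ℤ) = M at heq key
    have h1 := key_min D T ((i:ℤ) + M) (by omega) (by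
      have : (0:ℤ) ≤ (n:ℤ) := by positivity
      omega)
    split_ifs <;> omega
  · have key : c * (n:ℤ) ≤ -2 * (n:ℤ) :=
      mul_le_mul_of_nonneg_right hc (by positivity : (0:ℤ) ≤ (n:ℤ))
    generalize hM : c * (n:ℤ) = M at heq key
    have h1 := key_min (-D) (-T) (-(i:ℤ) - M) (by omega) (by
      have h2 : (i:ℤ) ≤ (n:ℤ) := by exact_mod_cast (by omega : i ≤ n)
      omega)
    rw [Int.natAbs_neg, Int.natAbs_neg] at h1
    split_ifs <;> omega

lemma dist_lb (n i : ℕ) (hn : 13 ≤ n) (hi : i ≤ n/2) :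
    (if i ≤ 2 then i else if n%6=5 ∧ i = n/2 then i/3+i%3+1 else i/3+i%3+2)
      ≤ (GP n 3).dist (pu 0) (pu (i : ZMod n)) := by
  have hne : NeZero n := ⟨by omega⟩
  have hreach : (GP n 3).Reachable (pu (0 : ZMod n)) (pu (i : ZMod n)) := by
    obtain ⟨p, _⟩ := walk_outer hn (0 : ZMod n) i
    exact ⟨p.copy rfl (by rw [zero_add])⟩
  obtain ⟨p, hplen⟩ := hreach.exists_walk_length_eq_dist
  obtain ⟨s, t, k, D, T, hlen, hD, hT, heq, hk, hk2⟩ := walk_invariant hn p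
  have h0 : ((D + 3*T - (i:ℕ) : ℤ) : ZMod n) = 0 := by
    simp only [idx_pu] at heq
    push_cast at heq ⊢
    rw [heq]; ring
  rw [ZMod.intCast_zmod_eq_zero_iff_dvd] at h0
  obtain ⟨c, hc⟩ := h0
  have heq' : D + 3*T = (i:ℤ) + c*(n:ℤ) := by linear_combination hc
  calc _ ≤ s + t + k := arith_lb n i hn hi s t k D T c hD hT heq' (hk2 (by simp) (by simp))
    _ = p.length := hlen.symm
    _ = _ := hplen


/-- Distance from `u_0` to `u_i` in `P(n,3)` for `0 ≤ i ≤ ⌊n/2⌋`, `n ≥ 13`. -/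
theorem dist_u0_ui (n i : ℕ) (hn : 13 ≤ n) (hi : i ≤ n / 2) :
    ((GP n 3).dist (pu 0) (pu (i : ZMod n)) : ℤ) =
      if i ≤ 2 then q3 i + r3 i
      else if n % 6 = 5 ∧ i = n / 2 then q3 i + r3 i + 1
      else q3 i + r3 i + 2 := by
  have hlb := dist_lb n i hn hi
  have hd : (GP n 3).dist (pu 0) (pu (i : ZMod n)) =
      (if i ≤ 2 then i else if n%6=5 ∧ i = n/2 then i/3+i%3+1 else i/3+i%3+2) := by
    refine le_antisymm ?_ hlb
    split_ifs with h1 h2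
    · exact dist_le_outer hn i
    · exact dist_le_special hn i h2.1 h2.2
    · exact dist_le_inner hn i (by omega)
  rw [hd]
  simp only [q3, r3]
  split_ifs <;> push_cast <;> omega
end

section
/- Let n ≥ 100 and let x, y, z be three pairwise distinct elements of ℤ_n. Then there exists a pair of integers (a, b) with 1 ≤ a ≤ ⌊n/3⌋ and 2a ≤ b ≤ ⌊(n+a)/2⌋ such that the set {x, y, z} is obtained from {0, a, b} (taken modulo n) by a translation or a reflection of ℤ_n; that is, there exists c ∈ ℤ_n with {x, y, z} = {c, a + c, b + c} or {x, y, z} = {c, c − a, c − b} in ℤ_n. -/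
open SimpleGraph

lemma triad_helper (n : ℕ) (hn : 100 ≤ n) (x : ZMod n) (p q : ℕ)
    (hp : 0 < p) (hpq : p < q) (hq : q < n) :
    ∃ a b : ℕ, 1 ≤ a ∧ a ≤ n / 3 ∧ 2 * a ≤ b ∧ b ≤ (n + a) / 2 ∧
      ∃ c : ZMod n,
        ({x, x + (p : ZMod n), x + (q : ZMod n)} : Set (ZMod n))
          = {c, (a : ZMod n) + c, (b : ZMod n) + c} ∨
        ({x, x + (p : ZMod n), x + (q : ZMod n)} : Set (ZMod n))
          = {c, c - (a : ZMod n), c - (b : ZMod n)} := by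
  have hnz : (n : ZMod n) = 0 := ZMod.natCast_self n
  have hqp : ((q - p : ℕ) : ZMod n) = (q : ZMod n) - p := by
    rw [Nat.cast_sub hpq.le]
  have hnp : ((n - p : ℕ) : ZMod n) = - (p : ZMod n) := by
    rw [Nat.cast_sub (by omega : p ≤ n), hnz]; ring
  have hnq : ((n - q : ℕ) : ZMod n) = - (q : ZMod n) := by
    rw [Nat.cast_sub hq.le, hnz]; ring
  rcases le_or_gt (q - p) p with h12 | h12
  · rcases le_or_gt (n - q) (q - p) with h23 | h23
    · -- d3 ≤ d2 ≤ d1 : reflection a = n-q, b = n-p, c = x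
      exact ⟨n - q, n - p, by omega, by omega, by omega, by omega, x, Or.inr (by
        rw [hnq, hnp]
        ext t; simp only [Set.mem_insert_iff, Set.mem_singleton_iff]
        constructor <;> (rintro (h|h|h) <;> simp [h] <;> ring_nf <;> tauto))⟩
    · rcases le_or_gt (n - q) p with h31 | h31
      · -- d2 ≤ d3 ≤ d1 : translation a = q-p, b = n-p, c = x + p
        exact ⟨q - p, n - p, by omega, by omega, by omega, by omega, x + p, Or.inl (by
          rw [hqp, hnp]
          ext t; simp only [Set.mem_insert_iff, Set.mem_singleton_iff]
          constructor <;> (rintro (h|h|h) <;> simp [h] <;> ring_nf <;> tauto))⟩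
      · -- d2 ≤ d1 ≤ d3 : reflection a = q-p, b = q, c = x + q
        exact ⟨q - p, q, by omega, by omega, by omega, by omega, x + q, Or.inr (by
          rw [hqp]
          ext t; simp only [Set.mem_insert_iff, Set.mem_singleton_iff]
          constructor <;> (rintro (h|h|h) <;> simp [h] <;> ring_nf <;> tauto))⟩
  · rcases le_or_gt (q - p) (n - q) with h23 | h23
    · -- d1 ≤ d2 ≤ d3 : translation a = p, b = q, c = x
      exact ⟨p, q, by omega, by omega, by omega, by omega, x, Or.inl (by
        ext t; simp only [Set.mem_insert_iff, Set.mem_singleton_iff]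
        constructor <;> (rintro (h|h|h) <;> simp [h] <;> ring_nf <;> tauto))⟩
    · rcases le_or_gt p (n - q) with h13 | h13
      · -- d1 ≤ d3 ≤ d2 : reflection a = p, b = n-q+p, c = x + p
        refine ⟨p, n - q + p, by omega, by omega, by omega, by omega, x + p, Or.inr ?_⟩
        have hb : ((n - q + p : ℕ) : ZMod n) = (p : ZMod n) - q := by
          push_cast [hnq]; ring
        rw [hb]
        ext t; simp only [Set.mem_insert_iff, Set.mem_singleton_iff]
        constructor <;> (rintro (h|h|h) <;> simp [h] <;> ring_nf <;> tauto)
      · -- d3 ≤ d1 ≤ d2 : translation a = n-q, b = n-q+p, c = x + q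
        refine ⟨n - q, n - q + p, by omega, by omega, by omega, by omega, x + q, Or.inl ?_⟩
        have hb : ((n - q + p : ℕ) : ZMod n) = (p : ZMod n) - q := by
          push_cast [hnq]; ring
        rw [hb, hnq]
        ext t; simp only [Set.mem_insert_iff, Set.mem_singleton_iff]
        constructor <;> (rintro (h|h|h) <;> simp [h] <;> ring_nf <;> tauto)

/-- Every triad of distinct elements of `ZMod n`, `n ≥ 100`, is a translation or a
reflection of a triad `{0, a, b}` with `1 ≤ a ≤ ⌊n/3⌋` and `2a ≤ b ≤ ⌊(n+a)/2⌋`. -/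
theorem triad_normal_form (n : ℕ) (hn : 100 ≤ n) (x y z : ZMod n)
    (hxy : x ≠ y) (hyz : y ≠ z) (hxz : x ≠ z) :
    ∃ a b : ℕ, 1 ≤ a ∧ a ≤ n / 3 ∧ 2 * a ≤ b ∧ b ≤ (n + a) / 2 ∧
      ∃ c : ZMod n,
        ({x, y, z} : Set (ZMod n)) = {c, (a : ZMod n) + c, (b : ZMod n) + c} ∨
        ({x, y, z} : Set (ZMod n)) = {c, c - (a : ZMod n), c - (b : ZMod n)} := by
  haveI : NeZero n := ⟨by omega⟩
  set p := (y - x).val with hpdef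
  set q := (z - x).val with hqdef
  have hyp : x + (p : ZMod n) = y := by
    rw [hpdef, ZMod.natCast_val, ZMod.cast_id]; ring
  have hzq : x + (q : ZMod n) = z := by
    rw [hqdef, ZMod.natCast_val, ZMod.cast_id]; ring
  have hp : 0 < p := by
    rcases Nat.eq_zero_or_pos p with h | h
    · exfalso; apply hxy; rw [← hyp, h]; simp
    · exact h
  have hq0 : 0 < q := by
    rcases Nat.eq_zero_or_pos q with h | h
    · exfalso; apply hxz; rw [← hzq, h]; simp
    · exact h
  have hpn : p < n := ZMod.val_lt _
  have hqn : q < n := ZMod.val_lt _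
  have hpq : p ≠ q := by
    intro h; apply hyz; rw [← hyp, ← hzq, h]
  rcases lt_or_gt_of_ne hpq with h | h
  · obtain ⟨a, b, h1, h2, h3, h4, c, hc⟩ := triad_helper n hn x p q hp h hqn
    rw [hyp, hzq] at hc
    exact ⟨a, b, h1, h2, h3, h4, c, hc⟩
  · obtain ⟨a, b, h1, h2, h3, h4, c, hc⟩ := triad_helper n hn x q p hq0 h hpn
    rw [hyp, hzq, Set.pair_comm z y] at hc
    exact ⟨a, b, h1, h2, h3, h4, c, hc⟩
end
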